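/- Let F₂ be a finite field of characteristic different from 2, let F be a subfield of F₂ with card(F₂) = q² where q = card(F) (i.e., F₂/F is an extension of degree 2). Then for every β ∈ F₂ with β ≠ 0: β + β⁻¹ ∈ F if and only if β ∈ F or (β^(q+1) = 1 and β ≠ 1 and β ≠ −1). Moreover the two alternatives are mutually exclusive: if β ∈ F and β^(q+1) = 1, then β = 1 or β = −1. -/

import Mathlib

/-!
A finite subfield `F` of cardinality `q` is exactly the set of roots of `X ^ q - X`, and
`x ↦ x ^ q` is a field endomorphism. Hence `β + β⁻¹ ∈ F` iff `β + β⁻¹` is fixed by it, i.e.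
`β ^ q + (β ^ q)⁻¹ = β + β⁻¹`, and since `a + a⁻¹ = b + b⁻¹` forces `a = b` or `a * b = 1`,
this says `β ^ q = β` or `β ^ (q + 1) = 1`. For `β ∈ F` the second condition reads `β ^ 2 = 1`.
-/

open Polynomial

theorem add_inv_eq_add_inv_iff {K : Type*} [Field K] {a b : K} (ha : a ≠ 0) (hb : b ≠ 0) :
    a + a⁻¹ = b + b⁻¹ ↔ a = b ∨ a * b = 1 := by
  have factor : a + a⁻¹ - (b + b⁻¹) = (a - b) * (a * b - 1) / (a * b) := by
    field_simp
    ring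
  rw [← sub_eq_zero, factor, div_eq_zero_iff, mul_eq_zero, mul_eq_zero, sub_eq_zero, sub_eq_zero]
  simp [ha, hb]

namespace Subfield

variable {K : Type*} [Field K] (F : Subfield K) [Finite F]

theorem mem_iff_pow_natCard_eq (x : K) : x ∈ F ↔ x ^ Nat.card F = x := by
  have : Fintype F := Fintype.ofFinite F
  rw [Nat.card_eq_fintype_card]
  set q := Fintype.card F
  have hq : 1 < q := Fintype.one_lt_card
  -- Over `F` the polynomial `X ^ q - X` has `q` distinct roots, so its roots in `K` are those of `F`.
  have roots_eq : (X ^ q - X : F[X]).roots.map F.subtype = (X ^ q - X : K[X]).roots := by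
    convert roots_map_of_injective_of_card_eq_natDegree F.subtype.injective _ using 2
    · simp
    · rw [FiniteField.roots_X_pow_card_sub_X, FiniteField.X_pow_card_sub_X_natDegree_eq F hq]
      rfl
  rw [← sub_eq_zero, ← eval_X (x := x), ← eval_pow, ← eval_sub, ← IsRoot.def,
    ← mem_roots (FiniteField.X_pow_card_sub_X_ne_zero K hq), ← roots_eq,
    FiniteField.roots_X_pow_card_sub_X]
  simp

theorem add_inv_mem_iff {β : K} (hβ : β ≠ 0) :
    β + β⁻¹ ∈ F ↔ β ∈ F ∨ β ^ (Nat.card F + 1) = 1 := by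
  have : Fintype F := Fintype.ofFinite F
  have frobenius_eq : ∀ x : K, x ^ Nat.card F = FiniteField.frobeniusAlgHom F K x := by
    simp [Nat.card_eq_fintype_card]
  rw [mem_iff_pow_natCard_eq, mem_iff_pow_natCard_eq, frobenius_eq, map_add, map_inv₀,
    ← frobenius_eq, add_inv_eq_add_inv_iff (pow_ne_zero _ hβ) hβ, pow_succ]

end Subfield

theorem trace_of_pi_in_base_field_general (F₂ : Type*) [Field F₂] [Finite F₂]
    (F : Subfield F₂) (q : ℕ) (hq : q = Nat.card F) :
    (∀ β : F₂, β ≠ 0 →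
      (β + β⁻¹ ∈ F ↔ (β ∈ F ∨ (β ^ (q + 1) = 1 ∧ β ≠ 1 ∧ β ≠ -1)))) ∧
    (∀ β : F₂, β ∈ F → β ^ (q + 1) = 1 → β = 1 ∨ β = -1) := by
  subst hq
  have square_eq_one {β : F₂} (hβF : β ∈ F) (hβ : β ^ (Nat.card F + 1) = 1) : β * β = 1 := by
    rwa [pow_succ, (F.mem_iff_pow_natCard_eq β).1 hβF] at hβ
  refine ⟨fun β hβ => ?_, fun β hβF hβ => mul_self_eq_one_iff.1 (square_eq_one hβF hβ)⟩
  rw [F.add_inv_mem_iff hβ]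
  by_cases hβF : β ∈ F
  · simp [hβF]
  · have h1 : β ≠ 1 := fun h => hβF (h ▸ F.one_mem)
    have h2 : β ≠ -1 := fun h => hβF (h ▸ F.neg_mem F.one_mem)
    simp [hβF, h1, h2]

theorem trace_of_pi_in_base_field (F₂ : Type*) [Field F₂] [Finite F₂]
    (hchar : ringChar F₂ ≠ 2) (F : Subfield F₂) (q : ℕ) (hq : q = Nat.card F)
    (hcard : Nat.card F₂ = q ^ 2) :
    (∀ β : F₂, β ≠ 0 →
      (β + β⁻¹ ∈ F ↔ (β ∈ F ∨ (β ^ (q + 1) = 1 ∧ β ≠ 1 ∧ β ≠ -1)))) ∧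
    (∀ β : F₂, β ∈ F → β ^ (q + 1) = 1 → β = 1 ∨ β = -1) :=
  trace_of_pi_in_base_field_general F₂ F q hq
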